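/- For a stationary process S with values in a finite linearly ordered alphabet and rank variables R_n, if for every ε > 0 there exists L* such that |H(S_L | S_1^{L−1}) − H(R_L | S_1^{L−1})| < ε for all L > L*, then lim inf_{L→∞} (1/L) H(R_1, ..., R_L) ≥ h(S), the Shannon entropy rate of S. -/

import Mathlib

/-!
By the chain rule, `H(R₁, …, R_L) = Σ_{k<L} H(R_{k+1} | R₁, …, R_k)`, and since `(R₁, …, R_k)` is a
function of `(S₁, …, S_k)`, data processing (a consequence of the concavity of `x ↦ -x log x`)
bounds each term below by `H(R_{k+1} | S₁, …, S_k)`. By hypothesis this differs from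
`H(S_{k+1} | S₁, …, S_k)` by a null sequence, whose Cesàro means vanish, while the chain rule for
`S` makes the Cesàro means of `H(S_{k+1} | S₁, …, S_k)` equal to `H(S₁, …, S_L) / L → h`.
Since `liminf` on `ℝ` is junk for sequences unbounded above, we also use
`H(R₁, …, R_L) ≤ H(S₁, …, S_L)`.
-/

open MeasureTheory ProbabilityTheory Filter Real

/-- Shannon entropy (base 2) of a random variable. -/
noncomputable def shEntropy {Ω : Type*} [MeasurableSpace Ω] {A : Type*}
    (μ : Measure Ω) (X : Ω → A) : ℝ :=
  -∑' a : A, (μ (X ⁻¹' {a})).toReal * Real.logb 2 (μ (X ⁻¹' {a})).toReal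

/-- Conditional Shannon entropy `H(Y|Z) = Σ_z P(Z=z) H(Y | Z=z)`. -/
noncomputable def condShEntropy {Ω : Type*} [MeasurableSpace Ω] {A B : Type*}
    (μ : Measure Ω) (Y : Ω → A) (Z : Ω → B) : ℝ :=
  ∑' b : B, (μ (Z ⁻¹' {b})).toReal * shEntropy (μ[|Z ⁻¹' {b}]) Y

open Classical in
/-- Rank variable `R_n(ω) = #{i : 1 ≤ i ≤ n, S_i(ω) ≤ S_n(ω)}`. -/
noncomputable def rankVar {Ω A : Type*} [LinearOrder A] (S : ℕ → Ω → A) (n : ℕ) (ω : Ω) : ℕ :=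
  ((Finset.Icc 1 n).filter (fun i => S i ω ≤ S n ω)).card

lemma Real.sum_mul_negMulLog_le {ι : Type*} {t : Finset ι} {w x : ι → ℝ} {y : ℝ}
    (hw : ∀ i ∈ t, 0 ≤ w i) (hx : ∀ i ∈ t, 0 ≤ x i)
    (hy : ∑ i ∈ t, w i * x i = (∑ i ∈ t, w i) * y) :
    ∑ i ∈ t, w i * negMulLog (x i) ≤ (∑ i ∈ t, w i) * negMulLog y := by
  rcases (Finset.sum_nonneg hw).eq_or_lt with hW | hW
  · have hw0 : ∀ i ∈ t, w i = 0 := (Finset.sum_eq_zero_iff_of_nonneg hw).1 hW.symm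
    rw [← hW, zero_mul]
    exact (Finset.sum_eq_zero fun i hi => by rw [hw0 i hi, zero_mul]).le
  · have hjensen := concaveOn_negMulLog.le_map_sum (t := t) (p := x)
      (w := fun i => w i / ∑ j ∈ t, w j) (fun i hi => div_nonneg (hw i hi) hW.le)
      (by rw [← Finset.sum_div, div_self hW.ne']) hx
    simp only [smul_eq_mul, div_mul_eq_mul_div, ← Finset.sum_div, hy,
      mul_div_cancel_left₀ _ hW.ne'] at hjensen
    rwa [div_le_iff₀ hW, mul_comm] at hjensen

lemma ProbabilityTheory.measureReal_inter_eq_cond_mul {Ω : Type*} [MeasurableSpace Ω]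
    (μ : Measure Ω) [IsFiniteMeasure μ] {s : Set Ω} (hs : MeasurableSet s) (t : Set Ω) :
    μ.real (s ∩ t) = (μ[|s]).real t * μ.real s := by
  simp only [measureReal_def, ← ENNReal.toReal_mul, cond_mul_eq_inter hs]

section Entropy

variable {Ω A B C : Type*} [MeasurableSpace Ω] {μ : Measure Ω}

lemma shEntropy_eq_tsum (X : Ω → A) :
    shEntropy μ X = ∑' a, negMulLog (μ.real (X ⁻¹' {a})) / log 2 := by
  rw [shEntropy, ← tsum_neg]
  congr 1 with a
  simp only [negMulLog, logb, measureReal_def]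
  ring

lemma shEntropy_eq_sum {X : Ω → A} {r : Finset A} (hr : Set.range X ⊆ r) :
    shEntropy μ X = (∑ a ∈ r, negMulLog (μ.real (X ⁻¹' {a}))) / log 2 := by
  rw [shEntropy_eq_tsum, Finset.sum_div]
  refine tsum_eq_sum fun a ha => ?_
  rw [Set.preimage_singleton_eq_empty.2 fun h => ha (hr h)]
  simp

lemma condShEntropy_eq_sum {Y : Ω → A} {Z : Ω → B} {r : Finset B} (hr : Set.range Z ⊆ r) :
    condShEntropy μ Y Z = ∑ b ∈ r, μ.real (Z ⁻¹' {b}) * shEntropy (μ[|Z ⁻¹' {b}]) Y := by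
  refine tsum_eq_sum fun b hb => ?_
  rw [Set.preimage_singleton_eq_empty.2 fun h => hb (hr h)]
  simp

lemma shEntropy_nonneg (ν : Measure Ω) [IsZeroOrProbabilityMeasure ν] (X : Ω → A) :
    0 ≤ shEntropy ν X := by
  rw [shEntropy_eq_tsum]
  exact tsum_nonneg fun a =>
    div_nonneg (negMulLog_nonneg measureReal_nonneg measureReal_le_one) (log_nonneg one_le_two)

lemma condShEntropy_nonneg (Y : Ω → A) (Z : Ω → B) :
    0 ≤ condShEntropy μ Y Z :=
  tsum_nonneg fun _ => mul_nonneg measureReal_nonneg (shEntropy_nonneg _ _)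

lemma shEntropy_of_subsingleton [IsProbabilityMeasure μ] [Subsingleton A] (X : Ω → A) :
    shEntropy μ X = 0 := by
  rw [shEntropy_eq_tsum]
  refine (tsum_congr fun a => ?_).trans tsum_zero
  have hX : X ⁻¹' {a} = Set.univ := Set.eq_univ_of_forall fun ω => Subsingleton.elim (X ω) a
  rw [hX, probReal_univ, negMulLog_one, zero_div]

lemma shEntropy_comp_of_injective (X : Ω → A) {e : A → B} (he : Function.Injective e) :
    shEntropy μ (e ∘ X) = shEntropy μ X := by
  simp only [shEntropy_eq_tsum]
  rw [← he.tsum_eq]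
  · congr 1 with a
    rw [Set.preimage_comp, ← Set.image_singleton, he.preimage_image]
  · intro b hb
    by_contra hbe
    refine hb ?_
    show negMulLog (μ.real (X ⁻¹' (e ⁻¹' {b}))) / log 2 = 0
    rw [Set.preimage_singleton_eq_empty.2 hbe]
    simp

variable [MeasurableSpace A] [MeasurableSingletonClass A]
  [MeasurableSpace B] [MeasurableSingletonClass B]

lemma sum_negMulLog_measureReal_inter [IsFiniteMeasure μ] {s : Set Ω} (hs : MeasurableSet s)
    {Y : Ω → B} (hY : Measurable Y) {r : Finset B} (hr : Set.range Y ⊆ r) :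
    ∑ b ∈ r, negMulLog (μ.real (s ∩ Y ⁻¹' {b}))
      = negMulLog (μ.real s) + μ.real s * (shEntropy (μ[|s]) Y * log 2) := by
  have hcond : (∑ b ∈ r, (μ[|s]).real (Y ⁻¹' {b})) * negMulLog (μ.real s)
      = negMulLog (μ.real s) := by
    rcases eq_or_ne (μ s) 0 with hμs | hμs
    · simp [measureReal_def, hμs]
    · have := cond_isProbabilityMeasure hμs
      rw [sum_measureReal_preimage_singleton r fun b _ => hY (measurableSet_singleton b),
        Set.preimage_eq_univ_iff.2 hr, probReal_univ, one_mul]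
  simp only [measureReal_inter_eq_cond_mul μ hs, negMulLog_mul, Finset.sum_add_distrib,
    ← Finset.mul_sum, ← Finset.sum_mul, hcond, shEntropy_eq_sum hr,
    div_mul_cancel₀ _ (log_pos one_lt_two).ne']
  ring

lemma shEntropy_pair_eq_add_condShEntropy [IsFiniteMeasure μ] {X : Ω → A} {Y : Ω → B}
    (hX : Measurable X) (hY : Measurable Y)
    (hXr : (Set.range X).Finite) (hYr : (Set.range Y).Finite) :
    shEntropy μ (fun ω => (X ω, Y ω)) = shEntropy μ X + condShEntropy μ Y X := by
  have hXr' : Set.range X ⊆ hXr.toFinset := hXr.coe_toFinset.ge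
  have hYr' : Set.range Y ⊆ hYr.toFinset := hYr.coe_toFinset.ge
  have hr : Set.range (fun ω => (X ω, Y ω)) ⊆ (hXr.toFinset ×ˢ hYr.toFinset : Finset _) := by
    rw [Finset.coe_product]
    exact (Set.range_pair_subset X Y).trans (Set.prod_mono hXr' hYr')
  rw [shEntropy_eq_sum hr, shEntropy_eq_sum hXr', condShEntropy_eq_sum hXr', Finset.sum_product]
  simp only [← Set.singleton_prod_singleton, Set.mk_preimage_prod,
    sum_negMulLog_measureReal_inter (hX (measurableSet_singleton _)) hY hYr',
    Finset.sum_add_distrib, add_div, ← mul_assoc, ← Finset.sum_mul,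
    mul_div_cancel_right₀ _ (log_pos one_lt_two).ne']

lemma shEntropy_comp_le [IsFiniteMeasure μ] {X : Ω → A} (hX : Measurable X)
    (hXr : (Set.range X).Finite) {f : A → B} (hf : Measurable f) :
    shEntropy μ (f ∘ X) ≤ shEntropy μ X := by
  have hinj : Function.Injective fun a => (f a, a) := fun _ _ h => (Prod.ext_iff.1 h).2
  have hfXr : (Set.range (f ∘ X)).Finite := by rw [Set.range_comp]; exact hXr.image f
  calc shEntropy μ (f ∘ X) ≤ shEntropy μ (f ∘ X) + condShEntropy μ X (f ∘ X) :=
        le_add_of_nonneg_right (condShEntropy_nonneg X (f ∘ X))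
    _ = shEntropy μ (fun ω => ((f ∘ X) ω, X ω)) :=
        (shEntropy_pair_eq_add_condShEntropy (hf.comp hX) hX hfXr hXr).symm
    _ = shEntropy μ X := shEntropy_comp_of_injective X hinj

/-- Concavity of entropy. -/
lemma sum_measureReal_mul_shEntropy_cond_le [IsFiniteMeasure μ] {ι : Type*} {t : Finset ι}
    {s : ι → Set Ω} (hs : ∀ i ∈ t, MeasurableSet (s i)) (hd : (t : Set ι).PairwiseDisjoint s)
    {Y : Ω → B} (hY : Measurable Y) (hYr : (Set.range Y).Finite) :
    ∑ i ∈ t, μ.real (s i) * shEntropy (μ[|s i]) Y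
      ≤ μ.real (⋃ i ∈ t, s i) * shEntropy (μ[|⋃ i ∈ t, s i]) Y := by
  have hYr' : Set.range Y ⊆ hYr.toFinset := hYr.coe_toFinset.ge
  have hu : MeasurableSet (⋃ i ∈ t, s i) := Finset.measurableSet_biUnion t hs
  simp only [shEntropy_eq_sum hYr', mul_div_assoc', ← Finset.sum_div, Finset.mul_sum]
  gcongr
  rw [Finset.sum_comm, measureReal_biUnion_finset hd hs]
  refine Finset.sum_le_sum fun b _ => Real.sum_mul_negMulLog_le
    (fun _ _ => measureReal_nonneg) (fun _ _ => measureReal_nonneg) ?_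
  rw [← measureReal_biUnion_finset hd hs, mul_comm, ← measureReal_inter_eq_cond_mul μ hu,
    Set.iUnion₂_inter, measureReal_biUnion_finset (hd.mono fun _ => Set.inter_subset_left)
      fun i hi => (hs i hi).inter (hY (measurableSet_singleton b))]
  exact Finset.sum_congr rfl fun i hi => by rw [measureReal_inter_eq_cond_mul μ (hs i hi), mul_comm]

lemma condShEntropy_le_condShEntropy_comp [IsFiniteMeasure μ] {Y : Ω → B} {Z : Ω → A}
    (hY : Measurable Y) (hYr : (Set.range Y).Finite)
    (hZ : Measurable Z) (hZr : (Set.range Z).Finite) (f : A → C) :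
    condShEntropy μ Y Z ≤ condShEntropy μ Y (f ∘ Z) := by
  classical
  have hZr' : Set.range Z ⊆ hZr.toFinset := hZr.coe_toFinset.ge
  have hfZr : Set.range (f ∘ Z) ⊆ (hZr.toFinset.image f : Finset C) := by
    rw [Set.range_comp, Finset.coe_image]; exact Set.image_mono hZr'
  rw [condShEntropy_eq_sum hZr', condShEntropy_eq_sum hfZr,
    ← Finset.sum_fiberwise_of_maps_to fun b hb => Finset.mem_image_of_mem f hb]
  refine Finset.sum_le_sum fun c _ => ?_
  have hfiber : (f ∘ Z) ⁻¹' {c} = ⋃ b ∈ hZr.toFinset.filter (f · = c), Z ⁻¹' {b} := by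
    ext ω
    simp only [Set.mem_preimage, Function.comp_apply, Set.mem_singleton_iff, Set.mem_iUnion,
      Finset.mem_filter, exists_prop]
    exact ⟨fun h => ⟨Z ω, ⟨hZr' ⟨ω, rfl⟩, h⟩, rfl⟩, fun ⟨b, ⟨_, hb⟩, hω⟩ => hω ▸ hb⟩
  rw [hfiber]
  exact sum_measureReal_mul_shEntropy_cond_le (fun b _ => hZ (measurableSet_singleton b))
    (Set.pairwiseDisjoint_fiber Z _) hY hYr

end Entropy

section PrefixVec

variable {Ω D : Type*}

/-- `prefixVec X L ω = (X₁ ω, …, X_L ω)`: processes are indexed from `1`. -/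
def prefixVec (X : ℕ → Ω → D) (L : ℕ) (ω : Ω) : Fin L → D :=
  fun i => X (i.1 + 1) ω

lemma measurable_prefixVec [MeasurableSpace Ω] [MeasurableSpace D] {X : ℕ → Ω → D}
    (hX : ∀ n, Measurable (X n)) (L : ℕ) : Measurable (prefixVec X L) :=
  measurable_pi_lambda _ fun _ => hX _

lemma finite_range_prefixVec {X : ℕ → Ω → D} (hXr : ∀ n, (Set.range (X n)).Finite) (L : ℕ) :
    (Set.range (prefixVec X L)).Finite :=
  (Set.Finite.pi fun i : Fin L => hXr (i.1 + 1)).subset <| by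
    rintro _ ⟨ω, rfl⟩
    exact fun i _ => ⟨ω, rfl⟩

lemma shEntropy_prefixVec_eq_sum [MeasurableSpace Ω] [MeasurableSpace D]
    [MeasurableSingletonClass D] {μ : Measure Ω} [IsProbabilityMeasure μ] {X : ℕ → Ω → D}
    (hX : ∀ n, Measurable (X n)) (hXr : ∀ n, (Set.range (X n)).Finite) (L : ℕ) :
    shEntropy μ (prefixVec X L)
      = ∑ k ∈ Finset.range L, condShEntropy μ (X (k + 1)) (prefixVec X k) := by
  induction L with
  | zero => exact shEntropy_of_subsingleton _
  | succ L ih =>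
    have hsplit : Function.Injective fun v : Fin (L + 1) → D => (Fin.init v, v (Fin.last L)) :=
      Prod.swap_injective.comp (Fin.snocEquiv fun _ => D).symm.injective
    rw [Finset.sum_range_succ, ← ih, ← shEntropy_pair_eq_add_condShEntropy
      (measurable_prefixVec hX L) (hX _) (finite_range_prefixVec hXr L) (hXr _),
      ← shEntropy_comp_of_injective _ hsplit]
    rfl

end PrefixVec

section Rank

variable {Ω A : Type*} [LinearOrder A]

lemma rankVar_le (S : ℕ → Ω → A) (n : ℕ) (ω : Ω) : rankVar S n ω ≤ n :=
  (Finset.card_filter_le _ _).trans (Nat.card_Icc 1 n).le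

lemma finite_range_rankVar (S : ℕ → Ω → A) (n : ℕ) : (Set.range (rankVar S n)).Finite :=
  (Set.finite_Iic n).subset (Set.range_subset_iff.2 (rankVar_le S n))

lemma rankVar_factorsThrough (S : ℕ → Ω → A) {n m : ℕ} (hnm : n ≤ m) :
    (rankVar S n).FactorsThrough (prefixVec S m) := by
  intro ω ω' h
  have hS : ∀ i, 1 ≤ i → i ≤ m → S i ω = S i ω' := fun i h1 h2 => by
    simpa [prefixVec, Nat.sub_add_cancel h1] using congrFun h ⟨i - 1, by omega⟩
  unfold rankVar
  congr 1
  refine Finset.filter_congr fun i hi => ?_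
  rw [Finset.mem_Icc] at hi
  rw [hS i hi.1 (hi.2.trans hnm), hS n (hi.1.trans hi.2) hnm]

lemma prefixVec_rankVar_factorsThrough (S : ℕ → Ω → A) (L : ℕ) :
    (prefixVec (rankVar S) L).FactorsThrough (prefixVec S L) :=
  fun _ _ h => funext fun i => rankVar_factorsThrough S i.2 h

lemma measurable_rankVar [MeasurableSpace Ω] [Countable A] [MeasurableSpace A]
    [MeasurableSingletonClass A] {S : ℕ → Ω → A} (hS : ∀ n, Measurable (S n)) (n : ℕ) :
    Measurable (rankVar S n) := by
  rw [← (rankVar_factorsThrough S le_rfl).extend_comp fun _ => 0]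
  exact Measurable.of_discrete.comp (measurable_prefixVec hS n)

variable [MeasurableSpace Ω] [Finite A] [MeasurableSpace A] [MeasurableSingletonClass A]
  {μ : Measure Ω} [IsProbabilityMeasure μ] {S : ℕ → Ω → A}

lemma shEntropy_prefixVec_rankVar_le (hS : ∀ n, Measurable (S n)) (L : ℕ) :
    shEntropy μ (prefixVec (rankVar S) L) ≤ shEntropy μ (prefixVec S L) := by
  rw [← (prefixVec_rankVar_factorsThrough S L).extend_comp fun _ => 0]
  exact shEntropy_comp_le (measurable_prefixVec hS L)
    (finite_range_prefixVec (fun _ => Set.toFinite _) L) Measurable.of_discrete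

lemma sum_condShEntropy_rankVar_le (hS : ∀ n, Measurable (S n)) (L : ℕ) :
    ∑ k ∈ Finset.range L, condShEntropy μ (rankVar S (k + 1)) (prefixVec S k)
      ≤ shEntropy μ (prefixVec (rankVar S) L) := by
  rw [shEntropy_prefixVec_eq_sum (measurable_rankVar hS) (finite_range_rankVar S)]
  refine Finset.sum_le_sum fun k _ => ?_
  rw [← (prefixVec_rankVar_factorsThrough S k).extend_comp fun _ => 0]
  exact condShEntropy_le_condShEntropy_comp (measurable_rankVar hS _) (finite_range_rankVar S _)
    (measurable_prefixVec hS k) (finite_range_prefixVec (fun _ => Set.toFinite _) k) _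

end Rank

/-- For a stationary finite-alphabet process `S_n = g ∘ T^{n-1}` with rank variables
`R_n`: if for every `ε > 0` there is `L*` with
`|H(S_L | S_1^{L−1}) − H(R_L | S_1^{L−1})| < ε` for all `L > L*`, then
`liminf_L (1/L) H(R_1,…,R_L) ≥ h(S)`. -/
theorem liminf_rank_entropy_ge_of_condEntropy_close {Ω A : Type*} [MeasurableSpace Ω]
    [Fintype A] [LinearOrder A] [MeasurableSpace A] [MeasurableSingletonClass A]
    (μ : Measure Ω) [IsProbabilityMeasure μ]
    (T : Ω → Ω) (hT : MeasurePreserving T μ μ) (g : Ω → A) (hg : Measurable g)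
    (S : ℕ → Ω → A) (hSdef : ∀ n ω, S n ω = g (T^[n - 1] ω))
    -- the Shannon entropy rate of S
    (h : ℝ)
    (hrate : Filter.Tendsto
      (fun L : ℕ => (1 / (L : ℝ)) * shEntropy μ (fun ω => fun i : Fin L => S (i.1 + 1) ω))
      Filter.atTop (nhds h))
    (hclose : ∀ ε : ℝ, 0 < ε → ∃ Lstar : ℕ, ∀ L : ℕ, Lstar < L →
      |condShEntropy μ (S L) (fun ω => fun i : Fin (L - 1) => S (i.1 + 1) ω)
        - condShEntropy μ (fun ω => rankVar S L ω)
            (fun ω => fun i : Fin (L - 1) => S (i.1 + 1) ω)| < ε) :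
    h ≤ Filter.liminf
      (fun L : ℕ => (1 / (L : ℝ)) *
        shEntropy μ (fun ω => fun i : Fin L => rankVar S (i.1 + 1) ω))
      Filter.atTop := by
  have hS : ∀ n, Measurable (S n) := fun n => by
    rw [show S n = g ∘ T^[n - 1] from funext (hSdef n)]
    exact hg.comp (hT.measurable.iterate _)
  have hSr : ∀ n, (Set.range (S n)).Finite := fun _ => Set.toFinite _
  set gap := fun k => condShEntropy μ (S (k + 1)) (prefixVec S k)
    - condShEntropy μ (rankVar S (k + 1)) (prefixVec S k)
  have hgap : Tendsto gap atTop (nhds 0) := by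
    refine Metric.tendsto_atTop.2 fun ε hε => ?_
    obtain ⟨Lstar, hL⟩ := hclose ε hε
    exact ⟨Lstar, fun k hk => by rw [Real.dist_eq, sub_zero]; exact hL (k + 1) (by omega)⟩
  have hlower : Tendsto (fun L : ℕ => (1 / (L : ℝ)) *
      ∑ k ∈ Finset.range L, condShEntropy μ (rankVar S (k + 1)) (prefixVec S k))
      atTop (nhds h) := by
    have hrate' : Tendsto (fun L : ℕ => (1 / (L : ℝ)) * shEntropy μ (prefixVec S L)) atTop
        (nhds h) := hrate
    refine (sub_zero h ▸ hrate'.sub hgap.cesaro).congr fun L => ?_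
    simp only [gap, ← shEntropy_prefixVec_eq_sum hS hSr, Finset.sum_sub_distrib, one_div]
    ring
  have hupper : IsBoundedUnder (· ≤ ·) atTop (fun L : ℕ => (1 / (L : ℝ)) *
      shEntropy μ (prefixVec (rankVar S) L)) :=
    hrate.isBoundedUnder_le.mono_le (Eventually.of_forall fun L =>
      mul_le_mul_of_nonneg_left (shEntropy_prefixVec_rankVar_le hS L) (by positivity))
  calc h = liminf _ atTop := hlower.liminf_eq.symm
    _ ≤ _ := liminf_le_liminf (Eventually.of_forall fun L =>
      mul_le_mul_of_nonneg_left (sum_condShEntropy_rankVar_le hS L) (by positivity))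
      hlower.isBoundedUnder_ge hupper.isCoboundedUnder_ge
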